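/- arXiv:1408.3205 — 6 statements merged into one kernel-verified Lean document; each statement's English description precedes it below -/
import Mathlib

section
/- Let t, k, d, N be positive integers and 2 ≤ v_1 ≤ v_2 ≤ ⋯ ≤ v_k with t < k and d < v_1. If A is a (d,t)-DTA(N; k, (v_1,…,v_k)), then |ρ(A,T)| ≥ d+1 for every t-way interaction T. -/
/-- An array `A` (rows indexed by `R`, columns by `J`) is of type `v` if every
entry in column `j` lies in `Z_{v j} = {0, 1, …, v j - 1}`. -/
def IsArray {R J : Type*} (v : J → ℕ) (A : R → J → ℕ) : Prop :=
  ∀ r j, A r j < v j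

/-- An `s`-way interaction: a set of `s` pairs `(j, σ)` with pairwise distinct
column indices `j` and value `σ ∈ Z_{v j}`. -/
def IsInteraction {J : Type*} [DecidableEq J] (v : J → ℕ) (s : ℕ)
    (T : Finset (J × ℕ)) : Prop :=
  T.card = s ∧ (T.image Prod.fst).card = s ∧ ∀ p ∈ T, p.2 < v p.1

/-- `rho A T`: the set of rows of `A` in which the interaction `T` is covered. -/
def rho {R J : Type*} [Fintype R] (A : R → J → ℕ) (T : Finset (J × ℕ)) :
    Finset R :=
  Finset.univ.filter fun r => ∀ p ∈ T, A r p.1 = p.2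

/-- `rhoSet A 𝒯 = ⋃_{T ∈ 𝒯} rho A T`. -/
def rhoSet {R J : Type*} [Fintype R] [DecidableEq R] (A : R → J → ℕ)
    (Ts : Finset (Finset (J × ℕ))) : Finset R :=
  Ts.sup (rho A)

/-- A `(d,t)`-detecting array of type `v`: for every `t`-way interaction `T` and
every set `𝒯` of exactly `d` `t`-way interactions,
`ρ(A,T) ⊆ ρ(A,𝒯) ↔ T ∈ 𝒯`. -/
def IsDTA {R J : Type*} [Fintype R] [DecidableEq R] [DecidableEq J] (v : J → ℕ) (d t : ℕ)
    (A : R → J → ℕ) : Prop :=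
  IsArray v A ∧
    ∀ T : Finset (J × ℕ), IsInteraction v t T →
      ∀ Ts : Finset (Finset (J × ℕ)), Ts.card = d →
        (∀ T' ∈ Ts, IsInteraction v t T') →
          (rho A T ⊆ rhoSet A Ts ↔ T ∈ Ts)

/-- A mixed covering array `MCA_λ(N; t, k, v)`: an array of type `v` such that
`|ρ(A,T)| ≥ λ` for every `t`-way interaction `T`. -/
def IsMCA {R J : Type*} [Fintype R] [DecidableEq J] (v : J → ℕ) (lam t : ℕ)
    (A : R → J → ℕ) : Prop :=
  IsArray v A ∧ ∀ T : Finset (J × ℕ), IsInteraction v t T → lam ≤ (rho A T).card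

/-- Super-simple of strength `t`: every `(t+1)`-way interaction is covered by at
most one row. -/
def IsSuperSimple {R J : Type*} [Fintype R] [DecidableEq J] (v : J → ℕ) (t : ℕ)
    (A : R → J → ℕ) : Prop :=
  ∀ T : Finset (J × ℕ), IsInteraction v (t + 1) T → (rho A T).card ≤ 1

/-- An orthogonal array `OA_λ(t, k, v)`: all entries in `Z_v` and
`|ρ(A,T)| = λ` for every `t`-way interaction `T`. (The size requirement
`N = λ·v^t` is imposed on the row-index type in the statements.) -/
def IsOA {R J : Type*} [Fintype R] [DecidableEq J] (vlev lam t : ℕ)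
    (A : R → J → ℕ) : Prop :=
  IsArray (fun _ : J => vlev) A ∧
    ∀ T : Finset (J × ℕ), IsInteraction (fun _ : J => vlev) t T →
      (rho A T).card = lam

/-- `Te` is an extension of the interaction `T`: it is obtained from `T` by
adjoining one pair `(j, σ)` with `σ ∈ Z_{v j}` whose column index `j` occurs in
no pair of `T`. -/
def IsExtension {J : Type*} [DecidableEq J] (v : J → ℕ)
    (T Te : Finset (J × ℕ)) : Prop :=
  ∃ p : J × ℕ, p.2 < v p.1 ∧ (∀ q ∈ T, q.1 ≠ p.1) ∧ Te = insert p T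

/-- `A` is `d`-extendible (with respect to strength `t`): for every `t`-way
interaction `T` and every list of `d` extensions `T_1, …, T_d` of `T`
(repetitions allowed), `ρ(A,T) \ (ρ(A,T_1) ∪ ⋯ ∪ ρ(A,T_d))` is nonempty. -/
def IsExtendible {R J : Type*} [Fintype R] [DecidableEq J] (v : J → ℕ)
    (d t : ℕ) (A : R → J → ℕ) : Prop :=
  ∀ T : Finset (J × ℕ), IsInteraction v t T →
    ∀ Te : Fin d → Finset (J × ℕ), (∀ i, IsExtension v T (Te i)) →
      ∃ r ∈ rho A T, ∀ i, r ∉ rho A (Te i)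

open Finset

section

variable {R J : Type*} [Fintype R] [DecidableEq R] [DecidableEq J] {v : J → ℕ}

namespace IsInteraction

variable {s : ℕ} {T : Finset (J × ℕ)}

lemma injOn_fst (hT : IsInteraction v s T) : Set.InjOn Prod.fst (T : Set (J × ℕ)) :=
  card_image_iff.mp (hT.2.1.trans hT.1.symm)

lemma notMem_erase_of_fst_eq (hT : IsInteraction v s T) {p q : J × ℕ} (hp : p ∈ T)
    (h : q.1 = p.1) : q ∉ T.erase p := fun hq =>
  ne_of_mem_erase hq (hT.injOn_fst (mem_of_mem_erase hq) hp h)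

lemma insert_erase (hT : IsInteraction v s T) {p q : J × ℕ} (hp : p ∈ T)
    (hq : q.2 < v q.1) (hfresh : q.1 = p.1 ∨ q.1 ∉ T.image Prod.fst) :
    IsInteraction v s (insert q (T.erase p)) := by
  have hcol : q.1 ∉ (T.erase p).image Prod.fst := by
    intro hmem
    obtain ⟨p', hp', hpq⟩ := mem_image.mp hmem
    rcases hfresh with h | h
    · exact hT.notMem_erase_of_fst_eq hp (hpq.trans h) hp'
    · exact h (hpq ▸ mem_image_of_mem _ (mem_of_mem_erase hp'))
  have hqB : q ∉ T.erase p := fun h => hcol (mem_image_of_mem _ h)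
  have hs : 0 < s := hT.1 ▸ card_pos.mpr ⟨p, hp⟩
  refine ⟨?_, ?_, ?_⟩
  · rw [card_insert_of_notMem hqB, card_erase_of_mem hp, hT.1]
    omega
  · rw [image_insert, card_insert_of_notMem hcol,
      card_image_of_injOn (hT.injOn_fst.mono (erase_subset p T)),
      card_erase_of_mem hp, hT.1]
    omega
  · intro p' hp'
    rcases mem_insert.mp hp' with rfl | h
    · exact hq
    · exact hT.2.2 p' (mem_of_mem_erase h)

end IsInteraction

lemma rho_subset_rhoSet_image_insert (A : R → J → ℕ) {T B : Finset (J × ℕ)} (hB : B ⊆ T)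
    (j : J) : rho A T ⊆ rhoSet A ((rho A T).image fun r => insert (j, A r j) B) := by
  intro r hr
  refine mem_sup.mpr ⟨_, mem_image_of_mem _ hr, ?_⟩
  simp only [rho, mem_filter, mem_univ, true_and, mem_insert, forall_eq_or_imp] at hr ⊢
  exact fun p hp => hr p (hB hp)

lemma IsDTA.not_rho_subset_rhoSet {d t : ℕ} {A : R → J → ℕ} (hA : IsDTA v d t A)
    {T : Finset (J × ℕ)} (hT : IsInteraction v t T) {S P : Finset (Finset (J × ℕ))}
    (hS : #S ≤ d) (hP : d ≤ #P) (hSP : ∀ T' ∈ S ∪ P, IsInteraction v t T' ∧ T' ≠ T) :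
    ¬ rho A T ⊆ rhoSet A S := by
  intro hsub
  obtain ⟨Ts, hSTs, hTsSP, hTs⟩ :=
    exists_subsuperset_card_eq subset_union_left hS (hP.trans (card_le_card subset_union_right))
  have hmem : T ∈ Ts :=
    (hA.2 T hT Ts hTs fun T' h => (hSP T' (hTsSP h)).1).mp
      (hsub.trans (sup_mono hSTs))
  exact (hSP T (hTsSP hmem)).2 rfl

end

theorem stmt_0_general {t k d N : ℕ} (ht : 0 < t) (hk : 0 < k)
    (v : Fin k → ℕ) (hmono : Monotone v)
    (htk : t < k) (hdv : d < v ⟨0, hk⟩)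
    (A : Fin N → Fin k → ℕ) (hA : IsDTA v d t A) :
    ∀ T : Finset (Fin k × ℕ), IsInteraction v t T → d + 1 ≤ (rho A T).card := by
  intro T hT
  by_contra! hlt
  obtain ⟨p, hp⟩ : T.Nonempty := card_pos.mp (hT.1 ▸ ht)
  obtain ⟨j, -, hj⟩ := exists_mem_notMem_of_card_lt_card (s := T.image Prod.fst)
    (t := univ) (by simpa [hT.2.1] using htk)
  -- Each row of `ρ(A,T)` is covered once `p` is traded for the row's entry in the new column `j`;
  -- the `v p.1 - 1 ≥ d` interactions that change only the value at `p` serve as padding.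
  set S := (rho A T).image fun r => insert (j, A r j) (T.erase p)
  set P := ((range (v p.1)).erase p.2).image fun σ => insert (p.1, σ) (T.erase p)
  have hS : #S ≤ d := card_image_le.trans (by omega)
  have hP : d ≤ #P := by
    have hv : v ⟨0, hk⟩ ≤ v p.1 := hmono (Nat.zero_le _)
    rw [card_image_of_injOn, card_erase_of_mem (mem_range.mpr (hT.2.2 p hp)), card_range]
    · omega
    intro σ _ τ _ h
    have hσ : (p.1, σ) ∉ T.erase p := hT.notMem_erase_of_fst_eq hp rfl
    exact congrArg Prod.snd ((insert_inj hσ).mp h)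
  have hne {q : Fin k × ℕ} (hq : q ∉ T) : insert q (T.erase p) ≠ T :=
    fun h => hq (h ▸ mem_insert_self q _)
  refine hA.not_rho_subset_rhoSet hT hS hP (fun T' hT' => ?_)
    (rho_subset_rhoSet_image_insert A (erase_subset p T) j)
  rcases mem_union.mp hT' with hT' | hT'
  · obtain ⟨r, -, rfl⟩ := mem_image.mp hT'
    exact ⟨hT.insert_erase hp (hA.1 r j) (Or.inr hj), hne fun h => hj (mem_image_of_mem _ h)⟩
  · obtain ⟨σ, hσ, rfl⟩ := mem_image.mp hT'
    refine ⟨hT.insert_erase hp (mem_range.mp (mem_of_mem_erase hσ)) (Or.inl rfl), hne fun h => ?_⟩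
    exact ne_of_mem_erase hσ (congrArg Prod.snd (hT.injOn_fst h hp rfl))

/-- Lemma: every `t`-way interaction of a `(d,t)`-DTA is covered by
at least `d+1` rows. -/
theorem stmt_0 {t k d N : ℕ} (ht : 0 < t) (hk : 0 < k) (hd : 0 < d) (hN : 0 < N)
    (v : Fin k → ℕ) (hmono : Monotone v) (hv2 : 2 ≤ v ⟨0, hk⟩)
    (htk : t < k) (hdv : d < v ⟨0, hk⟩)
    (A : Fin N → Fin k → ℕ) (hA : IsDTA v d t A) :
    ∀ T : Finset (Fin k × ℕ), IsInteraction v t T → d + 1 ≤ (rho A T).card :=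
  stmt_0_general ht hk v hmono htk hdv A hA
end

section
/- Let t, k, d, N be positive integers and 2 ≤ v_1 ≤ v_2 ≤ ⋯ ≤ v_k with t < k and d < v_1. Every (d,t)-DTA(N; k, (v_1,…,v_k)) satisfies N ≥ (d+1)·v_{k−t+1}·v_{k−t+2}⋯v_k; that is, the minimum size (d,t)-DTAN(k,(v_1,…,v_k)) of such a detecting array is at least (d+1)·∏_{i=k−t+1}^{k} v_i. -/
/-- Every `t`-way interaction of a `(d,t)`-DTA is covered at least `d+1` times. -/
lemma dta_cover {t k d N : ℕ} (ht : 0 < t) (hk : 0 < k) (htk : t < k)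
    (v : Fin k → ℕ) (hmono : Monotone v) (hdv : d < v ⟨0, hk⟩)
    (A : Fin N → Fin k → ℕ) (hA : IsDTA v d t A)
    (T : Finset (Fin k × ℕ)) (hT : IsInteraction v t T) :
    d + 1 ≤ (rho A T).card := by
  by_contra hcon
  push_neg at hcon
  have hle : (rho A T).card ≤ d := Nat.lt_succ_iff.mp hcon
  obtain ⟨hTcard, hTim, hTval⟩ := hT
  have hinj : Set.InjOn Prod.fst (T : Set (Fin k × ℕ)) :=
    Finset.card_image_iff.mp (by rw [hTim, hTcard])
  -- find a column not used by `T`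
  obtain ⟨j, hj⟩ : ∃ j : Fin k, j ∉ T.image Prod.fst := by
    by_contra h'
    push_neg at h'
    have : T.image Prod.fst = Finset.univ := Finset.eq_univ_iff_forall.mpr h'
    rw [this, Finset.card_univ, Fintype.card_fin] at hTim
    omega
  obtain ⟨p0, hp0⟩ : ∃ p, p ∈ T := Finset.card_pos.mp (by omega) |>.exists_mem
  set E : Finset (Fin k × ℕ) := T.erase p0 with hE
  have hEsub : E ⊆ T := Finset.erase_subset _ _
  have hEcard : E.card = t - 1 := by rw [hE, Finset.card_erase_of_mem hp0, hTcard]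
  have hEfst : ∀ q ∈ E, q.1 ≠ j := by
    intro q hq hqj
    exact hj (Finset.mem_image.mpr ⟨q, hEsub hq, hqj⟩)
  have hjnotE : ∀ σ : ℕ, (j, σ) ∉ E := fun σ h => hEfst _ h rfl
  -- the family of modified interactions
  set F : ℕ → Finset (Fin k × ℕ) := fun σ => insert (j, σ) E with hF
  have hFcard : ∀ σ, (F σ).card = t := by
    intro σ
    rw [hF, Finset.card_insert_of_notMem (hjnotE σ), hEcard]
    omega
  have hFint : ∀ σ, σ < v j → IsInteraction v t (F σ) := by
    intro σ hσ
    refine ⟨hFcard σ, ?_, ?_⟩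
    · rw [hF, Finset.image_insert]
      have h1 : j ∉ E.image Prod.fst := by
        intro h
        obtain ⟨q, hq, hq2⟩ := Finset.mem_image.mp h
        exact hEfst q hq hq2
      rw [Finset.card_insert_of_notMem h1,
        Finset.card_image_of_injOn (hinj.mono (by exact_mod_cast hEsub)), hEcard]
      omega
    · intro p hp
      rcases Finset.mem_insert.mp hp with h | h
      · rw [h]; exact hσ
      · exact hTval p (hEsub h)
  have hTne : ∀ σ, T ≠ F σ := by
    intro σ h
    have hp0F : p0 ∈ F σ := h ▸ hp0
    rcases Finset.mem_insert.mp hp0F with h1 | h1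
    · exact hj (Finset.mem_image.mpr ⟨p0, hp0, by rw [h1]⟩)
    · exact Finset.notMem_erase p0 T h1
  have hFinj : ∀ σ σ' : ℕ, F σ = F σ' → σ = σ' := by
    intro σ σ' h
    have : (j, σ) ∈ F σ' := h ▸ Finset.mem_insert_self _ _
    rcases Finset.mem_insert.mp this with h1 | h1
    · exact (Prod.mk.injEq _ _ _ _ ▸ h1).2
    · exact absurd h1 (hjnotE σ)
  have hcov : ∀ r ∈ rho A T, r ∈ rho A (F (A r j)) := by
    intro r hr
    simp only [rho, Finset.mem_filter, Finset.mem_univ, true_and] at hr ⊢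
    intro p hp
    rcases Finset.mem_insert.mp hp with h | h
    · rw [h]
    · exact hr p (hEsub h)
  -- build the set of `d` interactions
  set S : Finset (Finset (Fin k × ℕ)) := (Finset.range (v j)).image F with hS
  have hScard : S.card = v j := by
    rw [hS, Finset.card_image_of_injOn (fun a _ b _ h => hFinj a b h), Finset.card_range]
  set S0 : Finset (Finset (Fin k × ℕ)) := (rho A T).image (fun r => F (A r j)) with hS0
  have hS0sub : S0 ⊆ S := by
    intro x hx
    obtain ⟨r, _, hr2⟩ := Finset.mem_image.mp hx
    exact Finset.mem_image.mpr ⟨A r j, Finset.mem_range.mpr (hA.1 r j), hr2⟩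
  have hvj : d < v j := lt_of_lt_of_le hdv (hmono (by exact Nat.zero_le _ : (⟨0, hk⟩ : Fin k) ≤ j))
  have hS0card : S0.card ≤ d := le_trans (Finset.card_image_le) hle
  obtain ⟨Ts, hTs0, hTsS, hTscard⟩ :=
    Finset.exists_subsuperset_card_eq hS0sub hS0card (by omega : d ≤ S.card)
  have hTsInt : ∀ T' ∈ Ts, IsInteraction v t T' := by
    intro T' hT'
    obtain ⟨σ, hσ, hσ2⟩ := Finset.mem_image.mp (hTsS hT')
    exact hσ2 ▸ hFint σ (Finset.mem_range.mp hσ)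
  have hsub : rho A T ⊆ rhoSet A Ts := by
    intro r hr
    refine Finset.mem_sup.mpr ⟨F (A r j), ?_, hcov r hr⟩
    exact hTs0 (Finset.mem_image.mpr ⟨r, hr, rfl⟩)
  have hTin : T ∈ Ts := (hA.2 T ⟨hTcard, hTim, hTval⟩ Ts hTscard hTsInt).mp hsub
  obtain ⟨σ, _, hσ2⟩ := Finset.mem_image.mp (hTsS hTin)
  exact hTne σ hσ2.symm

lemma card_filter_ge (k m : ℕ) (h : m ≤ k) :
    (Finset.univ.filter fun i : Fin k => m ≤ (i : ℕ)).card = k - m := by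
  have himg : (Finset.univ.filter fun i : Fin k => m ≤ (i : ℕ)).image Fin.val
      = Finset.Ico m k := by
    ext n
    simp only [Finset.mem_image, Finset.mem_filter, Finset.mem_univ, true_and, Finset.mem_Ico]
    constructor
    · rintro ⟨i, hi, rfl⟩; exact ⟨hi, i.isLt⟩
    · rintro ⟨h1, h2⟩; exact ⟨⟨n, h2⟩, h1, rfl⟩
  have := Finset.card_image_of_injective
    (Finset.univ.filter fun i : Fin k => m ≤ (i : ℕ)) Fin.val_injective
  rw [himg, Nat.card_Ico] at this
  omega

/-- Theorem: lower bound `N ≥ (d+1)·∏_{i=k-t+1}^k v_i` for a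
`(d,t)`-DTA with nondecreasing levels `v_1 ≤ ⋯ ≤ v_k`. -/
theorem stmt_1 {t k d N : ℕ} (ht : 0 < t) (hk : 0 < k) (hd : 0 < d) (hN : 0 < N)
    (v : Fin k → ℕ) (hmono : Monotone v) (hv2 : 2 ≤ v ⟨0, hk⟩)
    (htk : t < k) (hdv : d < v ⟨0, hk⟩)
    (A : Fin N → Fin k → ℕ) (hA : IsDTA v d t A) :
    (d + 1) * ∏ i ∈ Finset.univ.filter (fun i : Fin k => k - t ≤ (i : ℕ)), v i ≤ N := by
  classical
  set C : Finset (Fin k) := Finset.univ.filter (fun i : Fin k => k - t ≤ (i : ℕ)) with hC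
  have hCcard : C.card = t := by
    rw [hC, card_filter_ge k (k - t) (Nat.sub_le _ _)]
    omega
  set G : Finset (Fin k → ℕ) :=
    Fintype.piFinset (fun i : Fin k =>
      if k - t ≤ (i : ℕ) then Finset.range (v i) else {0}) with hG
  have hmemG : ∀ g ∈ G, ∀ i : Fin k,
      (k - t ≤ (i : ℕ) → g i < v i) ∧ (¬ k - t ≤ (i : ℕ) → g i = 0) := by
    intro g hg i
    have := Fintype.mem_piFinset.mp hg i
    constructor
    · intro hi; rw [if_pos hi] at this; exact Finset.mem_range.mp this
    · intro hi; rw [if_neg hi] at this; exact Finset.mem_singleton.mp this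
  set Tg : (Fin k → ℕ) → Finset (Fin k × ℕ) := fun g => C.image (fun i => (i, g i)) with hTg
  have hinjpair : ∀ g : Fin k → ℕ, Function.Injective (fun i : Fin k => (i, g i)) :=
    fun g a b h => congrArg Prod.fst h
  have hTgint : ∀ g ∈ G, IsInteraction v t (Tg g) := by
    intro g hg
    refine ⟨?_, ?_, ?_⟩
    · rw [hTg, Finset.card_image_of_injective _ (hinjpair g), hCcard]
    · rw [hTg, Finset.image_image]
      have : (Prod.fst ∘ fun i : Fin k => (i, g i)) = id := rfl
      rw [this, Finset.image_id, hCcard]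
    · intro p hp
      obtain ⟨i, hi, rfl⟩ := Finset.mem_image.mp hp
      exact (hmemG g hg i).1 (Finset.mem_filter.mp hi).2
  have hrho : ∀ g (r : Fin N), r ∈ rho A (Tg g) ↔ ∀ i ∈ C, A r i = g i := by
    intro g r
    simp only [rho, Finset.mem_filter, Finset.mem_univ, true_and, hTg]
    constructor
    · intro h i hi; exact h (i, g i) (Finset.mem_image.mpr ⟨i, hi, rfl⟩)
    · intro h p hp
      obtain ⟨i, hi, rfl⟩ := Finset.mem_image.mp hp
      exact h i hi
  have hdisj : (G : Set (Fin k → ℕ)).PairwiseDisjoint (fun g => rho A (Tg g)) := by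
    intro g hg g' hg' hne
    refine Finset.disjoint_left.mpr fun r hr hr' => hne ?_
    funext i
    by_cases hi : k - t ≤ (i : ℕ)
    · have h1 := (hrho g r).mp hr i (Finset.mem_filter.mpr ⟨Finset.mem_univ _, hi⟩)
      have h2 := (hrho g' r).mp hr' i (Finset.mem_filter.mpr ⟨Finset.mem_univ _, hi⟩)
      omega
    · rw [(hmemG g hg i).2 hi, (hmemG g' hg' i).2 hi]
  have hGcard : G.card = ∏ i ∈ C, v i := by
    rw [hG, Fintype.card_piFinset]
    rw [hC, Finset.prod_filter]
    congr 1
    funext i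
    by_cases hi : k - t ≤ (i : ℕ)
    · rw [if_pos hi, if_pos hi, Finset.card_range]
    · rw [if_neg hi, if_neg hi, Finset.card_singleton]
  -- each interaction covered at least d+1 times
  have hcover : ∀ g ∈ G, d + 1 ≤ (rho A (Tg g)).card := fun g hg =>
    dta_cover ht hk htk v hmono hdv A hA (Tg g) (hTgint g hg)
  have hsum1 : G.card * (d + 1) ≤ ∑ g ∈ G, (rho A (Tg g)).card := by
    have := Finset.card_nsmul_le_sum G (fun g => (rho A (Tg g)).card) (d + 1) hcover
    simpa [smul_eq_mul] using this
  have hsum2 : ∑ g ∈ G, (rho A (Tg g)).card ≤ N := by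
    rw [← Finset.card_biUnion hdisj]
    calc (G.biUnion fun g => rho A (Tg g)).card ≤ (Finset.univ : Finset (Fin N)).card :=
          Finset.card_le_card (Finset.subset_univ _)
      _ = N := by rw [Finset.card_univ, Fintype.card_fin]
  calc (d + 1) * ∏ i ∈ Finset.univ.filter (fun i : Fin k => k - t ≤ (i : ℕ)), v i
      = G.card * (d + 1) := by rw [hGcard, hC, Nat.mul_comm]
    _ ≤ N := le_trans hsum1 hsum2
end

section
/- Let t, k, d, N, v be positive integers with t < k, v ≥ 2 and d < v. Every (d,t)-DTA(N; k, v), i.e., a (d,t)-detecting array in which all k factors have exactly v levels, satisfies N ≥ (d+1)·v^t. -/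
lemma rho_card_lb {R J : Type*} [Fintype R] [DecidableEq R] [DecidableEq J] [Fintype J]
    {v d t : ℕ} (ht : 0 < t) (htJ : t < Fintype.card J) (hdv : d < v)
    {A : R → J → ℕ} (hA : IsDTA (fun _ : J => v) d t A)
    {T : Finset (J × ℕ)} (hT : IsInteraction (fun _ : J => v) t T) :
    d + 1 ≤ (rho A T).card := by
  by_contra hlt
  push_neg at hlt
  have hcard : (rho A T).card ≤ d := by omega
  obtain ⟨hTc, hTf, hTv⟩ := hT
  obtain ⟨p₀, hp₀⟩ : ∃ p, p ∈ T := Finset.card_pos.mp (by omega)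
  obtain ⟨j, hj⟩ : ∃ j : J, j ∉ T.image Prod.fst := by
    by_contra h; push_neg at h
    have hsub : Finset.univ ⊆ T.image Prod.fst := fun x _ => h x
    have := Finset.card_le_card hsub
    simp only [Finset.card_univ] at this
    omega
  have hjT : ∀ q ∈ T, q.1 ≠ j := fun q hq he => hj (Finset.mem_image.mpr ⟨q, hq, he⟩)
  set E : ℕ → Finset (J × ℕ) := fun σ => insert (j, σ) (T.erase p₀) with hE
  have hnm : ∀ σ : ℕ, (j, σ) ∉ T.erase p₀ := by
    intro σ hmem
    exact hjT _ (Finset.mem_of_mem_erase hmem) rfl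
  have hinj : Set.InjOn Prod.fst (T : Set (J × ℕ)) :=
    Finset.card_image_iff.mp (by rw [hTf, hTc])
  have herasecard : (T.erase p₀).card = t - 1 := by
    rw [Finset.card_erase_of_mem hp₀, hTc]
  have hEcard : ∀ σ, (E σ).card = t := by
    intro σ
    rw [hE]
    simp only
    rw [Finset.card_insert_of_notMem (hnm σ), herasecard]
    omega
  have heraseim : ((T.erase p₀).image Prod.fst).card = t - 1 := by
    rw [Finset.card_image_of_injOn (hinj.mono (by exact_mod_cast Finset.erase_subset p₀ T)),
      herasecard]
  have hjnotim : j ∉ (T.erase p₀).image Prod.fst := by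
    intro hmem
    obtain ⟨q, hq, hq2⟩ := Finset.mem_image.mp hmem
    exact hjT q (Finset.mem_of_mem_erase hq) hq2
  have hEint : ∀ σ < v, IsInteraction (fun _ : J => v) t (E σ) := by
    intro σ hσ
    refine ⟨hEcard σ, ?_, ?_⟩
    · rw [hE]; simp only
      rw [Finset.image_insert, Finset.card_insert_of_notMem hjnotim, heraseim]
      omega
    · intro p hp
      rcases Finset.mem_insert.mp hp with h | h
      · subst h; exact hσ
      · exact hTv p (Finset.mem_of_mem_erase h)
  have hrho : ∀ r ∈ rho A T, r ∈ rho A (E (A r j)) := by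
    intro r hr
    simp only [rho, Finset.mem_filter, Finset.mem_univ, true_and] at hr ⊢
    intro p hp
    rcases Finset.mem_insert.mp hp with h | h
    · subst h; rfl
    · exact hr p (Finset.mem_of_mem_erase h)
  -- candidates
  set C : Finset (Finset (J × ℕ)) := (Finset.range v).image E with hC
  have hEinj : Set.InjOn E (Finset.range v : Set ℕ) := by
    intro σ _ σ' _ heq
    have : (j, σ) ∈ E σ' := heq ▸ Finset.mem_insert_self _ _
    rcases Finset.mem_insert.mp this with h | h
    · exact (Prod.mk.injEq .. ▸ h).2.symm ▸ rfl
    · exact absurd h (hnm σ)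
  have hCcard : C.card = v := by
    rw [hC, Finset.card_image_of_injOn hEinj, Finset.card_range]
  set S : Finset (Finset (J × ℕ)) := (rho A T).image (fun r => E (A r j)) with hS
  have hSC : S ⊆ C := by
    intro x hx
    obtain ⟨r, _, rfl⟩ := Finset.mem_image.mp hx
    exact Finset.mem_image.mpr ⟨A r j, Finset.mem_range.mpr (hA.1 r j), rfl⟩
  have hScard : S.card ≤ d := le_trans (Finset.card_image_le) hcard
  obtain ⟨Ts, hSTs, hTsC, hTscard⟩ :=
    Finset.exists_subsuperset_card_eq hSC hScard (by omega : d ≤ C.card)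
  have hTsint : ∀ T' ∈ Ts, IsInteraction (fun _ : J => v) t T' := by
    intro T' hT'
    obtain ⟨σ, hσ, rfl⟩ := Finset.mem_image.mp (hTsC hT')
    exact hEint σ (Finset.mem_range.mp hσ)
  have hTnot : T ∉ Ts := by
    intro hmem
    obtain ⟨σ, hσ, heq⟩ := Finset.mem_image.mp (hTsC hmem)
    have : (j, σ) ∈ T := heq ▸ Finset.mem_insert_self _ _
    exact hjT _ this rfl
  have hcover : rho A T ⊆ rhoSet A Ts := by
    intro r hr
    rw [rhoSet, Finset.mem_sup]
    exact ⟨E (A r j), hSTs (Finset.mem_image.mpr ⟨r, hr, rfl⟩), hrho r hr⟩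
  exact hTnot ((hA.2 T ⟨hTc, hTf, hTv⟩ Ts hTscard hTsint).mp hcover)
/-- Corollary: fixed level lower bound `N ≥ (d+1)·v^t`. -/
theorem stmt_2 {t k d N v : ℕ} (ht : 0 < t) (hk : 0 < k) (hd : 0 < d) (hN : 0 < N)
    (hv : 2 ≤ v) (htk : t < k) (hdv : d < v)
    (A : Fin N → Fin k → ℕ) (hA : IsDTA (fun _ : Fin k => v) d t A) :
    (d + 1) * v ^ t ≤ N := by
  set Tg : (Fin t → Fin v) → Finset (Fin k × ℕ) :=
    fun g => Finset.image (fun i => ((Fin.castLE htk.le i : Fin k), (g i : ℕ))) Finset.univ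
    with hTg
  have hmapinj : ∀ g : Fin t → Fin v,
      Function.Injective (fun i : Fin t => ((Fin.castLE htk.le i : Fin k), (g i : ℕ))) := by
    intro g i i' h
    exact Fin.castLE_injective htk.le (congrArg Prod.fst h)
  have hint : ∀ g, IsInteraction (fun _ : Fin k => v) t (Tg g) := by
    intro g
    refine ⟨?_, ?_, ?_⟩
    · rw [hTg]; simp only
      rw [Finset.card_image_of_injective _ (hmapinj g), Finset.card_univ, Fintype.card_fin]
    · rw [hTg]; simp only
      rw [Finset.image_image]
      have : (Prod.fst ∘ fun i : Fin t => ((Fin.castLE htk.le i : Fin k), (g i : ℕ)))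
          = fun i => Fin.castLE htk.le i := rfl
      rw [this, Finset.card_image_of_injective _ (Fin.castLE_injective htk.le),
        Finset.card_univ, Fintype.card_fin]
    · intro p hp
      obtain ⟨i, _, rfl⟩ := Finset.mem_image.mp hp
      exact (g i).is_lt
  have hdisj : ∀ g ∈ (Finset.univ : Finset (Fin t → Fin v)),
      ∀ g' ∈ (Finset.univ : Finset (Fin t → Fin v)), g ≠ g' →
      Disjoint (rho A (Tg g)) (rho A (Tg g')) := by
    intro g _ g' _ hne
    rw [Finset.disjoint_left]
    intro r hr hr'
    apply hne
    funext i
    simp only [rho, Finset.mem_filter, Finset.mem_univ, true_and] at hr hr'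
    have h1 := hr _ (Finset.mem_image.mpr ⟨i, Finset.mem_univ i, rfl⟩)
    have h2 := hr' _ (Finset.mem_image.mpr ⟨i, Finset.mem_univ i, rfl⟩)
    exact Fin.val_injective (h1.symm.trans h2)
  calc (d + 1) * v ^ t
      = ∑ _g : Fin t → Fin v, (d + 1) := by
        rw [Finset.sum_const, Finset.card_univ, Fintype.card_fun, Fintype.card_fin,
          Fintype.card_fin, smul_eq_mul, mul_comm]
    _ ≤ ∑ g : Fin t → Fin v, (rho A (Tg g)).card := by
        apply Finset.sum_le_sum
        intro g _
        exact rho_card_lb ht (by simpa using htk) hdv hA (hint g)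
    _ = (Finset.univ.biUnion (fun g : Fin t → Fin v => rho A (Tg g))).card :=
        (Finset.card_biUnion hdisj).symm
    _ ≤ N := by
        have := Finset.card_le_card
          (Finset.subset_univ (Finset.univ.biUnion (fun g : Fin t → Fin v => rho A (Tg g))))
        simpa using this
end

section
/- Let t, k, d, v be positive integers with t < k and v ≥ 2, and let A be an orthogonal array OA_{d+1}(t,k,v). Then A is d-extendible if and only if A is super-simple of strength t. -/

lemma rho_mono {R J : Type*} [Fintype R] (A : R → J → ℕ) {T T' : Finset (J × ℕ)}
    (h : T ⊆ T') : rho A T' ⊆ rho A T := by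
  intro r hr
  simp only [rho, Finset.mem_filter] at hr ⊢
  exact ⟨hr.1, fun p hp => hr.2 p (h hp)⟩

lemma ext_interaction {J : Type*} [DecidableEq J] {v : J → ℕ} {t : ℕ}
    {T Te : Finset (J × ℕ)} (hT : IsInteraction v t T)
    (hE : IsExtension v T Te) : IsInteraction v (t + 1) Te := by
  obtain ⟨p, hpv, hpnew, rfl⟩ := hE
  obtain ⟨hc, hi, hval⟩ := hT
  have hpT : p ∉ T := fun h => hpnew p h rfl
  have hp1 : p.1 ∉ T.image Prod.fst := by
    simp only [Finset.mem_image, not_exists]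
    rintro q ⟨hq, hq1⟩
    exact hpnew q hq hq1
  refine ⟨by rw [Finset.card_insert_of_notMem hpT, hc], ?_, ?_⟩
  · rw [Finset.image_insert, Finset.card_insert_of_notMem hp1, hi]
  · intro q hq
    rcases Finset.mem_insert.mp hq with rfl | hq
    · exact hpv
    · exact hval q hq

/-- Lemma: an `OA_{d+1}(t,k,v)` is `d`-extendible iff it is
super-simple of strength `t`. -/
theorem stmt_3 {t k d v : ℕ} (ht : 0 < t) (hk : 0 < k) (hd : 0 < d)
    (htk : t < k) (hv : 2 ≤ v)
    (A : Fin ((d + 1) * v ^ t) → Fin k → ℕ) (hA : IsOA v (d + 1) t A) :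
    IsExtendible (fun _ : Fin k => v) d t A ↔
      IsSuperSimple (fun _ : Fin k => v) t A := by
  obtain ⟨hArr, hOA⟩ := hA
  constructor
  · -- extendible → super-simple
    intro hext Te hTe
    by_contra hcon
    push_neg at hcon
    obtain ⟨r1, hr1, r2, hr2, hr12⟩ := Finset.one_lt_card.mp hcon
    have hmem1 : ∀ p ∈ Te, A r1 p.1 = p.2 := by
      simpa [rho, Finset.mem_filter] using hr1
    have hmem2 : ∀ p ∈ Te, A r2 p.1 = p.2 := by
      simpa [rho, Finset.mem_filter] using hr2
    have hTeNe : Te.Nonempty := Finset.card_pos.mp (by rw [hTe.1]; omega)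
    obtain ⟨p, hp⟩ := hTeNe
    have hinj : Set.InjOn Prod.fst (Te : Set (Fin k × ℕ)) :=
      Finset.card_image_iff.mp (by rw [hTe.1, hTe.2.1])
    set T := Te.erase p with hTdef
    have hTsub : T ⊆ Te := Finset.erase_subset p Te
    have hT : IsInteraction (fun _ : Fin k => v) t T := by
      refine ⟨by rw [Finset.card_erase_of_mem hp, hTe.1]; omega, ?_, fun q hq => hTe.2.2 q (hTsub hq)⟩
      rw [Finset.card_image_of_injOn (hinj.mono (by exact_mod_cast hTsub)),
        Finset.card_erase_of_mem hp, hTe.1]; omega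
    have hnotcol : ∀ q ∈ T, q.1 ≠ p.1 := by
      intro q hq hq1
      have : q = p := hinj (hTsub hq) hp hq1
      exact (Finset.ne_of_mem_erase hq) this
    -- the set of values appearing in column p.1 among rows of rho A T
    set S : Finset ℕ := (rho A T).image (fun r => A r p.1) with hSdef
    have hr1T : r1 ∈ rho A T := rho_mono A hTsub hr1
    have hr2T : r2 ∈ rho A T := rho_mono A hTsub hr2
    have hv1 : A r1 p.1 = p.2 := hmem1 p hp
    have hv2 : A r2 p.1 = p.2 := hmem2 p hp
    have hScard : S.card ≤ d := by
      have hsub2 : S ⊆ ((rho A T).erase r2).image (fun r => A r p.1) := by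
        intro x hx
        obtain ⟨r, hr, rfl⟩ := Finset.mem_image.mp hx
        by_cases hrr : r = r2
        · subst hrr
          exact Finset.mem_image.mpr ⟨r1, Finset.mem_erase.mpr ⟨hr12, hr1T⟩, by rw [hv1, hv2]⟩
        · exact Finset.mem_image.mpr ⟨r, Finset.mem_erase.mpr ⟨hrr, hr⟩, rfl⟩
      calc S.card ≤ (((rho A T).erase r2).image (fun r => A r p.1)).card :=
            Finset.card_le_card hsub2
        _ ≤ ((rho A T).erase r2).card := Finset.card_image_le
        _ = d := by rw [Finset.card_erase_of_mem hr2T, hOA T hT]; omega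
    set L := S.toList with hLdef
    have hLlen : L.length ≤ d := by rw [hLdef, Finset.length_toList]; exact hScard
    set g : Fin d → ℕ := fun i => if h : (i : ℕ) < L.length then L[(i : ℕ)] else p.2 with hgdef
    have hgS : ∀ i, g i ∈ S := by
      intro i
      simp only [hgdef]
      split
      · next h => exact Finset.mem_toList.mp (List.getElem_mem h)
      · exact Finset.mem_image.mpr ⟨r1, hr1T, hv1⟩
    set Tes : Fin d → Finset (Fin k × ℕ) := fun i => insert (p.1, g i) T with hTesdef
    have hTesExt : ∀ i, IsExtension (fun _ : Fin k => v) T (Tes i) := by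
      intro i
      refine ⟨(p.1, g i), ?_, hnotcol, rfl⟩
      obtain ⟨r, hr, hre⟩ := Finset.mem_image.mp (hgS i)
      simpa [← hre] using hArr r p.1
    obtain ⟨r, hrT, hrnot⟩ := hext T hT Tes hTesExt
    have hAS : A r p.1 ∈ S := Finset.mem_image.mpr ⟨r, hrT, rfl⟩
    obtain ⟨n, hn, hgn⟩ := List.mem_iff_getElem.mp (Finset.mem_toList.mpr hAS)
    have hnd : n < d := lt_of_lt_of_le hn hLlen
    refine hrnot ⟨n, hnd⟩ ?_
    have hgval : g ⟨n, hnd⟩ = A r p.1 := by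
      simp only [hgdef]
      rw [dif_pos hn]
      exact hgn
    simp only [rho, Finset.mem_filter]
    refine ⟨Finset.mem_univ r, fun q hq => ?_⟩
    rcases Finset.mem_insert.mp hq with rfl | hq
    · exact hgval.symm
    · simp only [rho, Finset.mem_filter] at hrT
      exact hrT.2 q hq
  · -- super-simple → extendible
    intro hss T hT Tes hTes
    have hcardT : (rho A T).card = d + 1 := hOA T hT
    have hsub : ∀ i, rho A (Tes i) ⊆ rho A T := by
      intro i
      obtain ⟨p, _, _, hEq⟩ := hTes i
      rw [hEq]
      exact rho_mono A (Finset.subset_insert p T)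
    have hone : ∀ i, (rho A (Tes i)).card ≤ 1 := fun i =>
      hss (Tes i) (ext_interaction hT (hTes i))
    set U := Finset.univ.biUnion (fun i : Fin d => rho A (Tes i)) with hU
    have hUcard : U.card ≤ d := by
      calc U.card ≤ ∑ i : Fin d, (rho A (Tes i)).card := Finset.card_biUnion_le
        _ ≤ ∑ _i : Fin d, 1 := Finset.sum_le_sum fun i _ => hone i
        _ = d := by simp
    have : ¬ rho A T ⊆ U := by
      intro hsubU
      have := Finset.card_le_card hsubU
      omega
    obtain ⟨r, hrT, hrU⟩ := Finset.not_subset.mp this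
    refine ⟨r, hrT, fun i hri => hrU ?_⟩
    exact Finset.mem_biUnion.mpr ⟨i, Finset.mem_univ i, hri⟩
end

section
/- Let t, k, d, N be positive integers and 2 ≤ v_1 ≤ v_2 ≤ ⋯ ≤ v_k with t < k and d < v_1, and let A be an N×k array of type (v_1,…,v_k). Then A is a (d,t)-DTA(N; k, (v_1,…,v_k)) if and only if A is a d-extendible MCA_{d+1}(N; t, k, (v_1,…,v_k)). -/
section Aux

variable {R J : Type*} [Fintype R] [DecidableEq R] [DecidableEq J]

lemma mem_rho_iff {A : R → J → ℕ} {T : Finset (J × ℕ)} {r : R} :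
    r ∈ rho A T ↔ ∀ p ∈ T, A r p.1 = p.2 := by
  simp [rho]

lemma rho_anti {A : R → J → ℕ} {T T' : Finset (J × ℕ)} (h : T ⊆ T') :
    rho A T' ⊆ rho A T := by
  intro r hr
  rw [mem_rho_iff] at *
  exact fun p hp => hr p (h hp)

lemma interaction_insert_erase {v : J → ℕ} {t : ℕ} (ht : 0 < t)
    {T : Finset (J × ℕ)} (hT : IsInteraction v t T)
    {p0 : J × ℕ} (hp0 : p0 ∈ T) {p : J × ℕ} (hp1 : ∀ q ∈ T, q.1 ≠ p.1)
    (hp2 : p.2 < v p.1) :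
    IsInteraction v t (insert p (T.erase p0)) := by
  obtain ⟨hc, hic, hval⟩ := hT
  have hpne : p ∉ T.erase p0 := fun h => hp1 p (Finset.mem_of_mem_erase h) rfl
  have hinj : Set.InjOn Prod.fst (T : Set (J × ℕ)) :=
    Finset.card_image_iff.mp (by rw [hic, hc])
  have hecard : (T.erase p0).card = t - 1 := by rw [Finset.card_erase_of_mem hp0, hc]
  have himg : ((T.erase p0).image Prod.fst).card = t - 1 := by
    rw [Finset.card_image_of_injOn (hinj.mono (by exact_mod_cast Finset.erase_subset _ _)),
      hecard]
  have hpimg : p.1 ∉ (T.erase p0).image Prod.fst := by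
    intro h
    obtain ⟨q, hq, hq1⟩ := Finset.mem_image.mp h
    exact hp1 q (Finset.mem_of_mem_erase hq) hq1
  refine ⟨?_, ?_, ?_⟩
  · rw [Finset.card_insert_of_notMem hpne, hecard]; omega
  · rw [Finset.image_insert, Finset.card_insert_of_notMem hpimg, himg]; omega
  · intro q hq
    rcases Finset.mem_insert.mp hq with h | h
    · exact h ▸ hp2
    · exact hval q (Finset.mem_of_mem_erase h)

/-- The key lemma for the forward direction: if `A` is a DTA and every row
covering the `t`-way interaction `T` is "hit" by one of at most `d` pairs in
fresh columns, we get a contradiction. -/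
lemma key_lemma {v : J → ℕ} {d t : ℕ} (ht : 0 < t) {A : R → J → ℕ}
    (hdta : ∀ T : Finset (J × ℕ), IsInteraction v t T →
      ∀ Ts : Finset (Finset (J × ℕ)), Ts.card = d →
        (∀ T' ∈ Ts, IsInteraction v t T') →
          (rho A T ⊆ rhoSet A Ts ↔ T ∈ Ts))
    {T : Finset (J × ℕ)} (hT : IsInteraction v t T)
    {j : J} (hj : ∀ q ∈ T, q.1 ≠ j) (hvj : d < v j)
    {Q : Finset (J × ℕ)} (hQcard : Q.card ≤ d)
    (hQ : ∀ p ∈ Q, (∀ q ∈ T, q.1 ≠ p.1) ∧ p.2 < v p.1)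
    (hcov : ∀ r ∈ rho A T, ∃ p ∈ Q, A r p.1 = p.2) : False := by
  classical
  set P : Finset (J × ℕ) :=
    Q ∪ (Finset.range (v j)).image (fun σ => (j, σ)) with hPdef
  have hPprop : ∀ p ∈ P, (∀ q ∈ T, q.1 ≠ p.1) ∧ p.2 < v p.1 := by
    intro p hp
    rcases Finset.mem_union.mp hp with h | h
    · exact hQ p h
    · obtain ⟨σ, hσ, rfl⟩ := Finset.mem_image.mp h
      exact ⟨hj, by simpa using Finset.mem_range.mp hσ⟩
  have hPcard : d ≤ P.card := by
    have h1 : ((Finset.range (v j)).image (fun σ => (j, σ))).card = v j := by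
      rw [Finset.card_image_of_injective _ (fun a b hab => by simpa using hab),
        Finset.card_range]
    have h2 : ((Finset.range (v j)).image (fun σ => (j, σ))).card ≤ P.card :=
      Finset.card_le_card (hPdef ▸ Finset.subset_union_right)
    omega
  obtain ⟨S, hQS, hSP, hScard⟩ := Finset.exists_subsuperset_card_eq
    Finset.subset_union_left hQcard hPcard
  obtain ⟨p0, hp0⟩ := Finset.card_pos.mp (by rw [hT.1]; exact ht)
  set f : J × ℕ → Finset (J × ℕ) := fun p => insert p (T.erase p0) with hfdef
  have hnotmem : ∀ p ∈ P, p ∉ T.erase p0 := fun p hp h =>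
    (hPprop p hp).1 p (Finset.mem_of_mem_erase h) rfl
  have hfinj : Set.InjOn f (S : Set (J × ℕ)) := by
    intro p hp p' hp' hff
    have h1 : p ∈ insert p' (T.erase p0) := by
      have := Finset.mem_insert_self p (T.erase p0)
      rwa [show insert p (T.erase p0) = insert p' (T.erase p0) from hff] at this
    rcases Finset.mem_insert.mp h1 with h | h
    · exact h
    · exact absurd h (hnotmem p (hSP hp))
  set Ts : Finset (Finset (J × ℕ)) := S.image f with hTsdef
  have hTscard : Ts.card = d := by
    rw [hTsdef, Finset.card_image_of_injOn hfinj, hScard]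
  have hTsint : ∀ T' ∈ Ts, IsInteraction v t T' := by
    intro T' hT'
    obtain ⟨p, hp, rfl⟩ := Finset.mem_image.mp hT'
    exact interaction_insert_erase ht hT hp0 (hPprop p (hSP hp)).1
      (hPprop p (hSP hp)).2
  have hcover : rho A T ⊆ rhoSet A Ts := by
    intro r hr
    obtain ⟨p, hpQ, hpr⟩ := hcov r hr
    rw [rhoSet, Finset.mem_sup]
    refine ⟨f p, Finset.mem_image_of_mem f (hQS hpQ), ?_⟩
    rw [mem_rho_iff]
    intro q hq
    rcases Finset.mem_insert.mp hq with h | h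
    · exact h ▸ hpr
    · exact mem_rho_iff.mp hr q (Finset.mem_of_mem_erase h)
  have hTmem : T ∈ Ts := (hdta T hT Ts hTscard hTsint).mp hcover
  obtain ⟨p, hpS, hfp⟩ := Finset.mem_image.mp hTmem
  have : p ∈ T := hfp ▸ Finset.mem_insert_self p _
  exact (hPprop p (hSP hpS)).1 p this rfl

end Aux

lemma exists_fresh_col {k t : ℕ} (htk : t < k) {v : Fin k → ℕ}
    {T : Finset (Fin k × ℕ)} (hT : IsInteraction v t T) :
    ∃ j : Fin k, ∀ q ∈ T, q.1 ≠ j := by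
  have hne : (T.image Prod.fst)ᶜ.Nonempty := by
    rw [← Finset.card_pos, Finset.card_compl, hT.2.1]
    simp only [Fintype.card_fin]
    omega
  obtain ⟨j, hj⟩ := hne
  rw [Finset.mem_compl] at hj
  exact ⟨j, fun q hq h => hj (Finset.mem_image.mpr ⟨q, hq, h⟩)⟩

/-- Theorem: `A` is a `(d,t)`-DTA iff `A` is a `d`-extendible
`MCA_{d+1}` of strength `t`. -/
theorem stmt_4 {t k d N : ℕ} (ht : 0 < t) (hk : 0 < k) (hd : 0 < d) (hN : 0 < N)
    (v : Fin k → ℕ) (hmono : Monotone v) (hv2 : 2 ≤ v ⟨0, hk⟩)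
    (htk : t < k) (hdv : d < v ⟨0, hk⟩)
    (A : Fin N → Fin k → ℕ) (hA : IsArray v A) :
    IsDTA v d t A ↔ (IsExtendible v d t A ∧ IsMCA v (d + 1) t A) := by
  classical
  constructor
  · rintro ⟨-, hdta⟩
    constructor
    · -- extendibility
      intro T hT Te hTe
      by_contra hcon
      push_neg at hcon
      have hcov : ∀ r ∈ rho A T, ∃ i : Fin d, r ∈ rho A (Te i) := by
        intro r hr
        obtain ⟨i, hi⟩ := hcon r hr
        exact ⟨i, hi⟩
      obtain ⟨j, hj⟩ := exists_fresh_col htk hT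
      have hvj : d < v j := lt_of_lt_of_le hdv (hmono (by exact Fin.mk_le_of_le_val (Nat.zero_le _)))
      refine key_lemma ht hdta hT hj hvj
        (Q := Finset.univ.image (fun i => (hTe i).choose))
        (le_trans Finset.card_image_le (by simp)) ?_ ?_
      · intro p hp
        obtain ⟨i, -, rfl⟩ := Finset.mem_image.mp hp
        obtain ⟨h1, h2, -⟩ := (hTe i).choose_spec
        exact ⟨h2, h1⟩
      · intro r hr
        obtain ⟨i, hi⟩ := hcov r hr
        refine ⟨(hTe i).choose, Finset.mem_image_of_mem _ (Finset.mem_univ i), ?_⟩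
        obtain ⟨-, -, h3⟩ := (hTe i).choose_spec
        rw [h3] at hi
        exact mem_rho_iff.mp hi _ (Finset.mem_insert_self _ _)
    · -- MCA
      refine ⟨hA, ?_⟩
      intro T hT
      by_contra hcard
      push_neg at hcard
      obtain ⟨j, hj⟩ := exists_fresh_col htk hT
      have hvj : d < v j := lt_of_lt_of_le hdv (hmono (by exact Fin.mk_le_of_le_val (Nat.zero_le _)))
      refine key_lemma ht hdta hT hj hvj
        (Q := (rho A T).image (fun r => (j, A r j)))
        (le_trans Finset.card_image_le (by omega)) ?_ ?_
      · intro p hp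
        obtain ⟨r, -, rfl⟩ := Finset.mem_image.mp hp
        exact ⟨hj, hA r j⟩
      · intro r hr
        exact ⟨(j, A r j), Finset.mem_image_of_mem _ hr, rfl⟩
  · rintro ⟨hext, -⟩
    refine ⟨hA, ?_⟩
    intro T hT Ts hTscard hTsint
    constructor
    · -- the hard direction: coverage implies membership
      intro hcover
      by_contra hTmem
      -- an arbitrary extension of T, used for interactions disjoint from T
      obtain ⟨j0, hj0⟩ := exists_fresh_col htk hT
      have hvj0 : 0 < v j0 :=
        lt_of_lt_of_le (by omega)
          (le_trans hv2 (hmono (Fin.mk_le_of_le_val (Nat.zero_le _))))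
      -- for each T' ∈ Ts, choose an extension of T whose rho contains
      -- rho A T ∩ rho A T'
      have hchoice : ∀ T' ∈ Ts, ∃ E, IsExtension v T E ∧
          ∀ r, r ∈ rho A T → r ∈ rho A T' → r ∈ rho A E := by
        intro T' hT'
        by_cases hcase : ∃ p ∈ T', ∀ q ∈ T, q.1 ≠ p.1
        · obtain ⟨p, hpT', hpfresh⟩ := hcase
          refine ⟨insert p T, ⟨p, (hTsint T' hT').2.2 p hpT', hpfresh, rfl⟩, ?_⟩
          intro r hr1 hr2
          rw [mem_rho_iff]
          intro q hq
          rcases Finset.mem_insert.mp hq with h | h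
          · exact h ▸ mem_rho_iff.mp hr2 p hpT'
          · exact mem_rho_iff.mp hr1 q h
        · -- every column of T' occurs in T; then rho A T ∩ rho A T' = ∅
          push_neg at hcase
          refine ⟨insert (j0, 0) T, ⟨(j0, 0), hvj0, hj0, rfl⟩, ?_⟩
          intro r hr1 hr2
          exfalso
          -- T' ⊆ T would force T' = T; so there is p ∈ T' \ T, and then
          -- r covers two different values in column p.1
          have hsub : ¬ T' ⊆ T := by
            intro hsub
            exact hTmem (by rwa [Finset.eq_of_subset_of_card_le hsub
              (by rw [hT.1, (hTsint T' hT').1])] at hT')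
          obtain ⟨p, hpT', hpT⟩ := Finset.not_subset.mp hsub
          obtain ⟨q, hqT, hq1⟩ := hcase p hpT'
          have h1 : A r p.1 = p.2 := mem_rho_iff.mp hr2 p hpT'
          have h2 : A r q.1 = q.2 := mem_rho_iff.mp hr1 q hqT
          rw [hq1] at h2
          exact hpT (by rwa [show q = p from Prod.ext hq1 (by omega)] at hqT)
      choose E hE1 hE2 using hchoice
      -- index Ts by Fin d
      have e : Fin d ≃ {x // x ∈ Ts} :=
        (Fin.castOrderIso hTscard.symm).toEquiv.trans Ts.equivFin.symm
      set Te : Fin d → Finset (Fin k × ℕ) := fun i => E (e i).1 (e i).2 with hTedef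
      obtain ⟨r, hr, hrn⟩ := hext T hT Te (fun i => hE1 (e i).1 (e i).2)
      have hrU := hcover hr
      rw [rhoSet, Finset.mem_sup] at hrU
      obtain ⟨T', hT', hrT'⟩ := hrU
      have := hE2 T' hT' r hr hrT'
      have hEq : Te (e.symm ⟨T', hT'⟩) = E T' hT' := by
        simp [hTedef]
      exact hrn (e.symm ⟨T', hT'⟩) (hEq ▸ this)
    · intro hTmem
      exact Finset.le_sup (f := rho A) hTmem
end

section
/- Let a and b be integers with 2 ≤ a ≤ b, let t < k be positive integers, let λ be an integer with 1 ≤ λ ≤ a, and set N = λ·b^t. An N×k array A of type (a, b, b, …, b) (one factor with a levels and k−1 factors with b levels) is a (λ−1,t)-DTA(N; k, (a^1 b^{k−1})) of optimum size meeting the lower bound N = λ·b^t if and only if A is a super-simple MCA_λ(N; t, k, (a^1 b^{k−1})) of optimum size N = λ·b^t. -/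
section Aux

open Finset

variable {R J : Type*} [Fintype R] [DecidableEq R] [DecidableEq J]
variable {v : J → ℕ} {A : R → J → ℕ} {lam t : ℕ}

lemma mem_rho {T : Finset (J × ℕ)} {r : R} :
    r ∈ rho A T ↔ ∀ p ∈ T, A r p.1 = p.2 := by simp [rho]

lemma interaction_injOn {s : ℕ} {T : Finset (J × ℕ)}
    (hT : IsInteraction v s T) : Set.InjOn Prod.fst (T : Set (J × ℕ)) :=
  Finset.card_image_iff.1 (hT.2.1.trans hT.1.symm)

lemma inter_card_le_one (hss : IsSuperSimple v t A)
    {T T' : Finset (J × ℕ)} (hT : IsInteraction v t T) (hT' : IsInteraction v t T')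
    (hne : T' ≠ T) : (rho A T ∩ rho A T').card ≤ 1 := by
  have hsub : ¬ T' ⊆ T := fun hsub =>
    hne (Finset.eq_of_subset_of_card_le hsub (by rw [hT.1, hT'.1]))
  obtain ⟨p, hpT', hpT⟩ := not_subset.1 hsub
  by_cases hcol : ∃ q ∈ T, q.1 = p.1
  · obtain ⟨q, hqT, hq1⟩ := hcol
    have hempty : rho A T ∩ rho A T' = ∅ := by
      rw [eq_empty_iff_forall_notMem]
      intro r hr
      rw [mem_inter] at hr
      have h1 := mem_rho.1 hr.1 q hqT
      have h2 := mem_rho.1 hr.2 p hpT'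
      have hqp : q = p := Prod.ext hq1 (by rw [← h1, hq1, h2])
      exact hpT (hqp ▸ hqT)
    simp [hempty]
  · push_neg at hcol
    have hpn : p ∉ T := hpT
    have hTe : IsInteraction v (t + 1) (insert p T) := by
      refine ⟨by rw [card_insert_of_notMem hpn, hT.1], ?_, ?_⟩
      · rw [image_insert, card_insert_of_notMem, hT.2.1]
        intro hmem
        obtain ⟨q, hq, hq1⟩ := mem_image.1 hmem
        exact hcol q hq hq1
      · intro q hq
        rcases mem_insert.1 hq with h | h
        · exact h ▸ hT'.2.2 p hpT'
        · exact hT.2.2 q h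
    refine le_trans (card_le_card ?_) (hss _ hTe)
    intro r hr
    rw [mem_inter] at hr
    rw [mem_rho]
    intro q hq
    rcases mem_insert.1 hq with h | h
    · exact h ▸ mem_rho.1 hr.2 p hpT'
    · exact mem_rho.1 hr.1 q h

lemma mca_ss_dta (hss : IsSuperSimple v t A) (hmca : IsMCA v lam t A)
    (hlam1 : 1 ≤ lam) : IsDTA v (lam - 1) t A := by
  refine ⟨hmca.1, fun T hT Ts hTs hTs' => ?_⟩
  constructor
  · intro hsub
    by_contra hTn
    have hbound : (rho A T ∩ rhoSet A Ts).card ≤ lam - 1 := by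
      have h1 : rho A T ∩ rhoSet A Ts = Ts.biUnion (fun T' => rho A T ∩ rho A T') := by
        rw [rhoSet, Finset.sup_eq_biUnion]
        ext r
        simp [mem_biUnion, mem_inter, and_assoc]
        tauto
      rw [h1]
      calc (Ts.biUnion (fun T' => rho A T ∩ rho A T')).card
          ≤ ∑ T' ∈ Ts, (rho A T ∩ rho A T').card := card_biUnion_le
        _ ≤ ∑ _T' ∈ Ts, 1 := by
            refine Finset.sum_le_sum fun T' hT' => ?_
            exact inter_card_le_one hss hT (hTs' T' hT') (fun h => hTn (h ▸ hT'))
        _ = lam - 1 := by rw [Finset.sum_const, smul_eq_mul, mul_one, hTs]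
    have heq : rho A T ∩ rhoSet A Ts = rho A T := inter_eq_left.2 hsub
    have := hmca.2 T hT
    rw [heq] at hbound
    omega
  · intro hmem
    intro r hr
    exact Finset.mem_sup.2 ⟨T, hmem, hr⟩

lemma no_small_image (hv : ∀ j, lam ≤ v j) (ht : 0 < t)
    (hDTA : IsDTA v (lam - 1) t A) {T : Finset (J × ℕ)} (hT : IsInteraction v t T)
    {j : J} (hj : ∀ p ∈ T, p.1 ≠ j)
    (him : ((rho A T).image (fun r => A r j)).card ≤ lam - 1) : False := by
  obtain ⟨q, hq⟩ := Finset.card_pos.1 (by rw [hT.1]; exact ht)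
  have hsubrange : (rho A T).image (fun r => A r j) ⊆ Finset.range (v j) := by
    intro σ hσ
    obtain ⟨r, _, rfl⟩ := mem_image.1 hσ
    exact mem_range.2 (hDTA.1 r j)
  obtain ⟨S, hVS, hSr, hScard⟩ := Finset.exists_subsuperset_card_eq hsubrange him
      (by rw [card_range]; have := hv j; omega)
  set g : ℕ → Finset (J × ℕ) := fun σ => insert (j, σ) (T.erase q) with hg
  have hjq : ∀ p ∈ T.erase q, p.1 ≠ j := fun p hp => hj p (mem_of_mem_erase hp)
  have hnotmem : ∀ σ, (j, σ) ∉ T.erase q := fun σ h => hjq _ h rfl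
  have hgne : ∀ σ, g σ ≠ T := by
    intro σ h
    have : (j, σ) ∈ T := h ▸ mem_insert_self _ _
    exact hj _ this rfl
  have hginj : Set.InjOn g (S : Set ℕ) := by
    intro σ1 _ σ2 _ h
    have h1 : (j, σ1) ∈ g σ2 := h ▸ mem_insert_self _ _
    rcases mem_insert.1 h1 with h' | h'
    · exact (Prod.ext_iff.1 h').2
    · exact absurd h' (hnotmem σ1)
  have hgint : ∀ σ ∈ S, IsInteraction v t (g σ) := by
    intro σ hσ
    have herase : Set.InjOn Prod.fst ((T.erase q : Finset (J × ℕ)) : Set (J × ℕ)) :=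
      (interaction_injOn hT).mono (by exact_mod_cast erase_subset q T)
    have hec : (T.erase q).card = t - 1 := by rw [card_erase_of_mem hq, hT.1]
    refine ⟨?_, ?_, ?_⟩
    · rw [card_insert_of_notMem (hnotmem σ), hec]; omega
    · rw [image_insert, card_insert_of_notMem, Finset.card_image_iff.2 herase, hec]
      · omega
      · intro hmem
        obtain ⟨p, hp, hp1⟩ := mem_image.1 hmem
        exact hjq p hp hp1
    · intro p hp
      rcases mem_insert.1 hp with h | h
      · exact h ▸ (mem_range.1 (hSr hσ))
      · exact hT.2.2 p (mem_of_mem_erase h)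
  set Ts : Finset (Finset (J × ℕ)) := S.image g with hTs
  have hTscard : Ts.card = lam - 1 := by
    rw [hTs, card_image_of_injOn hginj, hScard]
  have hTsint : ∀ T' ∈ Ts, IsInteraction v t T' := by
    intro T' hT'
    obtain ⟨σ, hσ, rfl⟩ := mem_image.1 hT'
    exact hgint σ hσ
  have hsub : rho A T ⊆ rhoSet A Ts := by
    intro r hr
    have hmemS : A r j ∈ S := hVS (mem_image_of_mem _ hr)
    have hrg : r ∈ rho A (g (A r j)) := by
      rw [mem_rho]
      intro p hp
      rcases mem_insert.1 hp with h | h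
      · rw [h]
      · exact mem_rho.1 hr p (mem_of_mem_erase h)
    exact Finset.mem_sup.2 ⟨g (A r j), mem_image_of_mem g hmemS, hrg⟩
  have hTmem := (hDTA.2 T hT Ts hTscard hTsint).1 hsub
  obtain ⟨σ, _, hσeq⟩ := mem_image.1 hTmem
  exact hgne σ hσeq

lemma dta_mca {k : ℕ} {A : R → Fin k → ℕ} {v : Fin k → ℕ}
    (hv : ∀ j, lam ≤ v j) (ht : 0 < t) (htk : t < k)
    (hDTA : IsDTA v (lam - 1) t A) : IsMCA v lam t A := by
  refine ⟨hDTA.1, fun T hT => ?_⟩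
  by_contra hlt
  push_neg at hlt
  obtain ⟨j, hj⟩ : ∃ j : Fin k, ∀ p ∈ T, p.1 ≠ j := by
    by_contra h
    push_neg at h
    have hsub : (Finset.univ : Finset (Fin k)) ⊆ T.image Prod.fst := by
      intro j _
      obtain ⟨p, hp, hpj⟩ := h j
      exact mem_image.2 ⟨p, hp, hpj⟩
    have := card_le_card hsub
    rw [hT.2.1, Finset.card_univ, Fintype.card_fin] at this
    omega
  exact no_small_image hv ht hDTA hT hj
    (le_trans card_image_le (by omega))

lemma rho_card_eq {b : ℕ} (hb1 : 1 ≤ b) (hmca : IsMCA v lam t A) (hlam1 : 1 ≤ lam)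
    (hcard : Fintype.card R = lam * b ^ t)
    {T : Finset (J × ℕ)} (hT : IsInteraction v t T)
    (hvb : ∀ p ∈ T, v p.1 = b) : (rho A T).card = lam := by
  classical
  set C : Finset J := T.image Prod.fst with hC
  have hCcard : C.card = t := hT.2.1
  have hvC : ∀ c ∈ C, v c = b := by
    intro c hc
    obtain ⟨p, hp, rfl⟩ := mem_image.1 hc
    exact hvb p hp
  set Ψ : R → Finset (J × ℕ) := fun r => C.image (fun c => (c, A r c)) with hΨ
  have hsecinj : ∀ r : R, Function.Injective (fun c : J => (c, A r c)) := by
    intro r c1 c2 h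
    exact (Prod.ext_iff.1 h).1
  have hΨcard : ∀ r, (Ψ r).card = t := by
    intro r
    rw [hΨ, card_image_of_injective _ (hsecinj r), hCcard]
  have hΨcols : ∀ r, (Ψ r).image Prod.fst = C := by
    intro r
    rw [hΨ, Finset.image_image]
    ext c
    simp
  have hΨint : ∀ r, IsInteraction v t (Ψ r) := by
    intro r
    refine ⟨hΨcard r, by rw [hΨcols r, hCcard], ?_⟩
    intro p hp
    obtain ⟨c, _, rfl⟩ := mem_image.1 hp
    exact hmca.1 r c
  have hcover : ∀ (T' : Finset (J × ℕ)) (r : R), (∀ p ∈ T', p.1 ∈ C) →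
      T'.card = t → r ∈ rho A T' → T' = Ψ r := by
    intro T' r hcols hcard' hr
    refine Finset.eq_of_subset_of_card_le ?_ (by rw [hΨcard r, hcard'])
    intro p hp
    have : (p.1, A r p.1) ∈ Ψ r := mem_image_of_mem _ (hcols p hp)
    rwa [mem_rho.1 hr p hp] at this
  have hfiber : ∀ r r' : R, r' ∈ rho A (Ψ r) ↔ Ψ r' = Ψ r := by
    intro r r'
    constructor
    · intro h
      have hvals : ∀ c ∈ C, A r' c = A r c := by
        intro c hc
        exact mem_rho.1 h (c, A r c) (mem_image_of_mem _ hc)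
      rw [hΨ]
      exact Finset.image_congr (fun c hc => by rw [hvals c hc])
    · intro h
      rw [mem_rho]
      intro p hp
      obtain ⟨c, hc, rfl⟩ := mem_image.1 hp
      have : (c, A r' c) ∈ Ψ r := h ▸ mem_image_of_mem _ hc
      obtain ⟨c', hc', heq⟩ := mem_image.1 this
      have hcc : c' = c := (Prod.ext_iff.1 heq).1
      subst hcc
      exact ((Prod.ext_iff.1 heq).2).symm
  set Im : Finset (Finset (J × ℕ)) := Finset.univ.image Ψ with hIm
  have hsum : ∑ T' ∈ Im, (rho A T').card = lam * b ^ t := by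
    rw [← hcard, Fintype.card, Finset.card_eq_sum_card_image Ψ Finset.univ]
    refine Finset.sum_congr rfl ?_
    intro T' hT'
    obtain ⟨r, _, rfl⟩ := mem_image.1 hT'
    congr 1
    ext r'
    rw [mem_filter, hfiber r r']
    simp
  have hmemIm : ∀ (T' : Finset (J × ℕ)), (∀ p ∈ T', p.1 ∈ C) → T'.card = t →
      IsInteraction v t T' → T' ∈ Im := by
    intro T' hcols hc hint
    have hlec := hmca.2 T' hint
    have hpos : 0 < (rho A T').card := by omega
    obtain ⟨r, hr⟩ := Finset.card_pos.1 hpos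
    rw [hcover T' r hcols hc hr]
    exact mem_image_of_mem _ (mem_univ r)
  have hTIm : T ∈ Im := hmemIm T (fun p hp => mem_image_of_mem _ hp) hT.1 hT
  have hImge : b ^ t ≤ Im.card := by
    set D := C.pi (fun _ => Finset.range b) with hD
    set e : (∀ c ∈ C, ℕ) → Finset (J × ℕ) := fun f => C.attach.image
      (fun c => (c.1, f c.1 c.2)) with he
    have hecols : ∀ f, ∀ p ∈ e f, p.1 ∈ C := by
      intro f p hp
      obtain ⟨c, _, rfl⟩ := mem_image.1 hp
      exact c.2
    have hecard : ∀ f, (e f).card = t := by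
      intro f
      rw [he]
      rw [card_image_of_injOn, card_attach, hCcard]
      intro c1 _ c2 _ h
      exact Subtype.ext (Prod.ext_iff.1 h).1
    have heint : ∀ f ∈ D, IsInteraction v t (e f) := by
      intro f hf
      refine ⟨hecard f, ?_, ?_⟩
      · have : (e f).image Prod.fst = C := by
          rw [he, Finset.image_image]
          exact Finset.attach_image_val
        rw [this, hCcard]
      · intro p hp
        obtain ⟨c, _, rfl⟩ := mem_image.1 hp
        have := Finset.mem_pi.1 hf c.1 c.2
        rw [hvC c.1 c.2]
        exact mem_range.1 this
    have hemem : ∀ f ∈ D, e f ∈ Im :=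
      fun f hf => hmemIm (e f) (hecols f) (hecard f) (heint f hf)
    have heinj : Set.InjOn e (D : Set (∀ c ∈ C, ℕ)) := by
      intro f1 _ f2 _ h
      funext c hc
      have h1 : (c, f1 c hc) ∈ e f2 := by
        rw [← h, he]
        exact mem_image_of_mem _ (mem_attach _ ⟨c, hc⟩)
      obtain ⟨c', _, heq⟩ := mem_image.1 h1
      have hcc : c'.1 = c := (Prod.ext_iff.1 heq).1
      have := (Prod.ext_iff.1 heq).2
      subst hcc
      exact this.symm
    have hDcard : D.card = b ^ t := by
      rw [hD, Finset.card_pi]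
      simp [hCcard]
    calc b ^ t = D.card := hDcard.symm
      _ = (D.image e).card := (card_image_of_injOn heinj).symm
      _ ≤ Im.card := card_le_card (by
          intro x hx
          obtain ⟨f, hf, rfl⟩ := mem_image.1 hx
          exact hemem f hf)
  have hImrest : ∀ T' ∈ Im.erase T, lam ≤ (rho A T').card := by
    intro T' hT'
    obtain ⟨r, _, rfl⟩ := mem_image.1 (mem_of_mem_erase hT')
    exact hmca.2 _ (hΨint r)
  have hsum2 : (rho A T).card + ∑ T' ∈ Im.erase T, (rho A T').card = lam * b ^ t := by
    rw [← Finset.add_sum_erase Im (fun T' => (rho A T').card) hTIm] at hsum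
    exact hsum
  have hsum3 : (Im.erase T).card * lam ≤ ∑ T' ∈ Im.erase T, (rho A T').card := by
    have := Finset.card_nsmul_le_sum (Im.erase T) (fun T' => (rho A T').card) lam hImrest
    simpa using this
  have hecard2 : (Im.erase T).card = Im.card - 1 := card_erase_of_mem hTIm
  have hbt1 : 1 ≤ b ^ t := Nat.one_le_pow _ _ (by omega)
  have hge : lam ≤ (rho A T).card := hmca.2 T hT
  have h4 : (b ^ t - 1) * lam ≤ (Im.erase T).card * lam := by
    apply Nat.mul_le_mul_right
    omega
  have hkey : (b ^ t - 1) * lam + lam = lam * b ^ t := by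
    rw [Nat.sub_one_mul, mul_comm]
    have : lam ≤ lam * b ^ t := Nat.le_mul_of_pos_right _ (by omega)
    omega
  set x := (rho A T).card
  set P := (b ^ t - 1) * lam
  set Q := lam * b ^ t
  set y := ∑ T' ∈ Im.erase T, (rho A T').card
  set z := (Im.erase T).card * lam
  omega

lemma dta_supersimple {b : ℕ}
    (hv : ∀ j, lam ≤ v j) (hb1 : 1 ≤ b) (hlam1 : 1 ≤ lam) (ht : 0 < t)
    (h0 : ∀ j j' : J, v j ≠ b → v j' ≠ b → j = j')
    (hcard : Fintype.card R = lam * b ^ t)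
    (hDTA : IsDTA v (lam - 1) t A) (hmca : IsMCA v lam t A) :
    IsSuperSimple v t A := by
  intro Te hTe
  by_contra hgt
  push_neg at hgt
  obtain ⟨r1, hr1, r2, hr2, hrne⟩ := Finset.one_lt_card.1 hgt
  obtain ⟨p, hpTe, hTb⟩ : ∃ p ∈ Te, ∀ q ∈ Te.erase p, v q.1 = b := by
    by_cases hex : ∃ p ∈ Te, v p.1 ≠ b
    · obtain ⟨p, hp, hpb⟩ := hex
      refine ⟨p, hp, fun q hq => ?_⟩
      by_contra hqb
      have hq1 : q.1 = p.1 := h0 q.1 p.1 hqb hpb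
      have : q = p := interaction_injOn hTe (mem_of_mem_erase hq) hp hq1
      exact (Finset.ne_of_mem_erase hq) this
    · push_neg at hex
      have hne : Te.Nonempty := Finset.card_pos.1 (by rw [hTe.1]; omega)
      exact ⟨hne.choose, hne.choose_spec, fun q hq => hex q (mem_of_mem_erase hq)⟩
  set T : Finset (J × ℕ) := Te.erase p with hTdef
  set j : J := p.1 with hjdef
  have hTsub : T ⊆ Te := erase_subset p Te
  have hTcard : T.card = t := by rw [hTdef, card_erase_of_mem hpTe, hTe.1]; omega
  have hTinjOn : Set.InjOn Prod.fst (T : Set (J × ℕ)) :=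
    (interaction_injOn hTe).mono (by exact_mod_cast hTsub)
  have hTint : IsInteraction v t T :=
    ⟨hTcard, by rw [Finset.card_image_iff.2 hTinjOn, hTcard],
      fun q hq => hTe.2.2 q (hTsub hq)⟩
  have hjT : ∀ q ∈ T, q.1 ≠ j := by
    intro q hq hq1
    have : q = p := (interaction_injOn hTe) (hTsub hq) hpTe hq1
    exact (Finset.ne_of_mem_erase hq) this
  have hρ : rho A Te ⊆ rho A T := by
    intro r hr
    rw [mem_rho]
    exact fun q hq => mem_rho.1 hr q (hTsub hq)
  have hv1 : A r1 j = p.2 := mem_rho.1 hr1 p hpTe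
  have hv2 : A r2 j = p.2 := mem_rho.1 hr2 p hpTe
  have hρcard : (rho A T).card = lam := rho_card_eq hb1 hmca hlam1 hcard hTint hTb
  have hr1T : r1 ∈ rho A T := hρ hr1
  have hr2T : r2 ∈ rho A T := hρ hr2
  have hVsub : (rho A T).image (fun r => A r j) ⊆
      ((rho A T).erase r1).image (fun r => A r j) := by
    intro σ hσ
    obtain ⟨r, hr, rfl⟩ := mem_image.1 hσ
    by_cases hrr : r = r1
    · subst hrr
      refine mem_image.2 ⟨r2, Finset.mem_erase.2 ⟨hrne.symm, hr2T⟩, ?_⟩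
      rw [hv2, ← hv1]
    · exact mem_image.2 ⟨r, Finset.mem_erase.2 ⟨hrr, hr⟩, rfl⟩
  have him : ((rho A T).image (fun r => A r j)).card ≤ lam - 1 := by
    calc ((rho A T).image (fun r => A r j)).card
        ≤ (((rho A T).erase r1).image (fun r => A r j)).card := card_le_card hVsub
      _ ≤ ((rho A T).erase r1).card := card_image_le
      _ = lam - 1 := by rw [card_erase_of_mem hr1T, hρcard]
  exact no_small_image hv ht hDTA hTint hjT him

end Aux

/-- STATEMENT 8 (Theorem: for type `(a^1 b^{k-1})` with `2 ≤ a ≤ b`,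
`1 ≤ λ ≤ a` and `N = λ·b^t`, an array is an optimum `(λ-1,t)`-DTA meeting the
lower bound iff it is a super-simple `MCA_λ` of optimum size `N = λ·b^t`). -/
theorem stmt_8 {a b t k lam : ℕ} (ha : 2 ≤ a) (hab : a ≤ b)
    (ht : 0 < t) (htk : t < k) (hlam1 : 1 ≤ lam) (hlama : lam ≤ a)
    (A : Fin (lam * b ^ t) → Fin k → ℕ)
    (hA : IsArray (fun j : Fin k => if (j : ℕ) = 0 then a else b) A) :
    IsDTA (fun j : Fin k => if (j : ℕ) = 0 then a else b) (lam - 1) t A ↔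
      (IsSuperSimple (fun j : Fin k => if (j : ℕ) = 0 then a else b) t A ∧
        IsMCA (fun j : Fin k => if (j : ℕ) = 0 then a else b) lam t A) := by
  set v : Fin k → ℕ := fun j : Fin k => if (j : ℕ) = 0 then a else b with hvdef
  have hvlam : ∀ j, lam ≤ v j := by
    intro j
    by_cases h : (j : ℕ) = 0 <;> simp [hvdef, h] <;> omega
  have hb1 : 1 ≤ b := by omega
  have hcard : Fintype.card (Fin (lam * b ^ t)) = lam * b ^ t := Fintype.card_fin _
  constructor
  · intro hDTA
    have hmca := dta_mca hvlam ht htk hDTA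
    refine ⟨dta_supersimple hvlam hb1 hlam1 ht ?_ hcard hDTA hmca, hmca⟩
    intro j j' hjb hj'b
    have h1 : (j : ℕ) = 0 := by
      by_contra h
      simp [hvdef, h] at hjb
    have h2 : (j' : ℕ) = 0 := by
      by_contra h
      simp [hvdef, h] at hj'b
    exact Fin.ext (by rw [h1, h2])
  · rintro ⟨hss, hmca⟩
    exact mca_ss_dta hss hmca hlam1
end
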